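/- Every continuous map f : ℝP¹ → ℝP² extends to a continuous map f' : ℝP² → ℝP², where ℝP¹ is regarded as a subspace of ℝP² via the standard (equatorial) inclusion. -/

import Mathlib

noncomputable section
open Metric Set

open Metric Set

abbrev USphere (n : ℕ) : Type :=
  (sphere (0 : EuclideanSpace ℝ (Fin (n+1))) 1 : Set (EuclideanSpace ℝ (Fin (n+1))))

def antipodalSetoid (n : ℕ) : Setoid (USphere n) where
  r x y := (x : EuclideanSpace ℝ (Fin (n+1))) = (y : EuclideanSpace ℝ (Fin (n+1)))
    ∨ (x : EuclideanSpace ℝ (Fin (n+1))) = -(y : EuclideanSpace ℝ (Fin (n+1)))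
  iseqv := by
    constructor
    · intro x; exact Or.inl rfl
    · rintro x y (h | h)
      · exact Or.inl h.symm
      · right; rw [h]; simp
    · rintro x y z (h1 | h1) (h2 | h2)
      · exact Or.inl (h1.trans h2)
      · right; rw [h1, h2]
      · right; rw [h1, h2]
      · left; rw [h1, h2]; simp

def RP (n : ℕ) : Type := Quotient (antipodalSetoid n)

instance (n : ℕ) : TopologicalSpace (RP n) := by unfold RP; infer_instance

/-- `K` is an absolute extensor of `X`: every continuous map into `K` defined on a closed
subset of `X` extends to a continuous map on all of `X`. -/
def IsAbsoluteExtensor (X : Type*) [TopologicalSpace X] (K : Type*) [TopologicalSpace K] : Prop :=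
  ∀ A : Set X, IsClosed A → ∀ f : C(A, K), ∃ g : C(X, K), ∀ a : A, g a = f a

/-- The covering projection from the sphere to projective space. -/
def pcov (n : ℕ) : USphere n → RP n := fun z => Quotient.mk (antipodalSetoid n) z

def coordIncl (n : ℕ) (x : EuclideanSpace ℝ (Fin (n+1))) : EuclideanSpace ℝ (Fin (n+2)) :=
  WithLp.toLp 2 (fun i : Fin (n+2) => if h : (i : ℕ) < n + 1 then x ⟨i, h⟩ else 0)

lemma coordIncl_mem (n : ℕ) (x : USphere n) :
    coordIncl n (x : EuclideanSpace ℝ (Fin (n+1))) ∈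
      sphere (0 : EuclideanSpace ℝ (Fin (n+2))) 1 := by
  obtain ⟨x, hx⟩ := x
  rw [mem_sphere_iff_norm, sub_zero, EuclideanSpace.norm_eq] at hx ⊢
  have h2 : ∑ i : Fin (n+2), ‖coordIncl n x i‖ ^ 2 = ∑ i : Fin (n+1), ‖x i‖ ^ 2 := by
    rw [Fin.sum_univ_castSucc]
    simp [coordIncl, Fin.is_lt, Fin.is_le]
  rw [h2]; exact hx

lemma coordIncl_neg (n : ℕ) (x : EuclideanSpace ℝ (Fin (n+1))) :
    coordIncl n (-x) = -(coordIncl n x) := by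
  ext i
  by_cases h : (i : ℕ) < n + 1 <;> simp [coordIncl, h] <;> split_ifs <;> simp

/-- The equatorial inclusion of spheres. -/
def sphereIncl (n : ℕ) : USphere n → USphere (n+1) :=
  fun x => ⟨coordIncl n (x : EuclideanSpace ℝ (Fin (n+1))), coordIncl_mem n x⟩

/-- The standard (equatorial) inclusion `ℝPⁿ → ℝP^(n+1)`. -/
def rpIncl (n : ℕ) : RP n → RP (n+1) :=
  Quotient.map' (sphereIncl n) (by
    rintro x y (h | h)
    · left; show coordIncl n _ = coordIncl n _; rw [h]
    · right
      show coordIncl n (x : EuclideanSpace ℝ (Fin (n+1))) = -(coordIncl n _)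
      rw [h, coordIncl_neg])
open Metric Set

/-- The real Hilbert space ℓ². -/
abbrev Hilbertl2 : Type := lp (fun _ : ℕ => ℝ) 2

def antipodalSetoidInf : Setoid (sphere (0 : Hilbertl2) 1 : Set Hilbertl2) where
  r x y := (x : Hilbertl2) = (y : Hilbertl2) ∨ (x : Hilbertl2) = -(y : Hilbertl2)
  iseqv := by
    constructor
    · intro x; exact Or.inl rfl
    · rintro x y (h | h)
      · exact Or.inl h.symm
      · right; rw [h]; simp
    · rintro x y z (h1 | h1) (h2 | h2)
      · exact Or.inl (h1.trans h2)
      · right; rw [h1, h2]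
      · right; rw [h1, h2]
      · left; rw [h1, h2]; simp

/-- Infinite real projective space: the quotient of the unit sphere of ℓ² by the
antipodal identification. -/
def RPInf : Type := Quotient antipodalSetoidInf

instance : TopologicalSpace RPInf := by unfold RPInf; infer_instance
abbrev UBall3 : Type := (closedBall (0 : EuclideanSpace ℝ (Fin 3)) 1 : Set (EuclideanSpace ℝ (Fin 3)))

def hemiLift (x : EuclideanSpace ℝ (Fin 3)) : EuclideanSpace ℝ (Fin 4) :=
  WithLp.toLp 2 (fun i : Fin 4 => if h : (i : ℕ) < 3 then x ⟨i, h⟩ else Real.sqrt (1 - ‖x‖ ^ 2))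

lemma hemiLift_mem (x : UBall3) :
    hemiLift (x : EuclideanSpace ℝ (Fin 3)) ∈ sphere (0 : EuclideanSpace ℝ (Fin 4)) 1 := by
  obtain ⟨x, hx⟩ := x
  rw [mem_closedBall, dist_zero_right] at hx
  have hx2 : ‖x‖ ^ 2 ≤ 1 := by nlinarith [norm_nonneg x]
  have hsum : ∑ i : Fin 3, ‖x i‖ ^ 2 = ‖x‖ ^ 2 := by
    rw [EuclideanSpace.norm_eq, Real.sq_sqrt]
    positivity
  rw [mem_sphere_iff_norm, sub_zero, EuclideanSpace.norm_eq]
  have h2 : ∑ i : Fin 4, ‖hemiLift x i‖ ^ 2 = 1 := by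
    rw [Fin.sum_univ_castSucc]
    have hlast : ‖hemiLift x (Fin.last 3)‖ ^ 2 = 1 - ‖x‖ ^ 2 := by
      simp only [hemiLift, WithLp.ofLp_toLp, Fin.last]
      rw [dif_neg (by norm_num)]
      rw [Real.norm_eq_abs, sq_abs, Real.sq_sqrt (by linarith)]
    have hcast : ∀ i : Fin 3, ‖hemiLift x (Fin.castSucc i)‖ ^ 2 = ‖x i‖ ^ 2 := by
      intro i
      simp only [hemiLift, WithLp.ofLp_toLp]
      rw [dif_pos (by exact i.is_lt)]
      congr 1
    rw [hlast]
    rw [Finset.sum_congr rfl (fun i _ => hcast i), hsum]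
    ring
  rw [h2, Real.sqrt_one]

/-- The quotient map `q₃ : B³ → ℝP³` (identify `B³` with the upper hemisphere of `S³`). -/
def q3 : UBall3 → RP 3 := fun x => pcov 3 ⟨hemiLift (x : EuclideanSpace ℝ (Fin 3)), hemiLift_mem x⟩

/-! ### The first modification of ℝP³ -/

/-- The disk of radius 1/3 (the meridian disk `D`). -/
abbrev DiskThird : Type :=
  (closedBall (0 : EuclideanSpace ℝ (Fin 2)) (1/3) : Set (EuclideanSpace ℝ (Fin 2)))

/-- The parametrization of the solid torus `L ⊂ B³`, obtained by rotating the disk `D`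
(of radius 1/3, centered at `(0,1/2,0)` in the yz-plane) about the z-axis. -/
def LparamE (s : USphere 1) (d : EuclideanSpace ℝ (Fin 2)) : EuclideanSpace ℝ (Fin 3) :=
  WithLp.toLp 2 (fun i : Fin 3 =>
    if i = 0 then -((s : EuclideanSpace ℝ (Fin 2)) 1) * (1/2 + d 0)
    else if i = 1 then ((s : EuclideanSpace ℝ (Fin 2)) 0) * (1/2 + d 0)
    else d 1)

lemma circle_sq_sum (s : USphere 1) :
    ((s : EuclideanSpace ℝ (Fin 2)) 0) ^ 2 + ((s : EuclideanSpace ℝ (Fin 2)) 1) ^ 2 = 1 := by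
  obtain ⟨s, hs⟩ := s
  rw [mem_sphere_iff_norm, sub_zero, EuclideanSpace.norm_eq] at hs
  have h0 : (0:ℝ) ≤ ∑ i : Fin 2, ‖s i‖ ^ 2 := by positivity
  have := Real.sq_sqrt h0
  rw [hs] at this
  rw [Fin.sum_univ_two] at this
  simpa [Real.norm_eq_abs, sq_abs] using this.symm

lemma disk_sq_sum (d : EuclideanSpace ℝ (Fin 2)) (hd : d ∈ closedBall (0 : EuclideanSpace ℝ (Fin 2)) (1/3)) :
    (d 0) ^ 2 + (d 1) ^ 2 ≤ 1/9 := by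
  rw [mem_closedBall, dist_zero_right, EuclideanSpace.norm_eq] at hd
  have h0 : (0:ℝ) ≤ ∑ i : Fin 2, ‖d i‖ ^ 2 := by positivity
  have h1 := Real.sq_sqrt h0
  have h2 : (∑ i : Fin 2, ‖d i‖ ^ 2) ≤ 1/9 := by
    nlinarith [Real.sqrt_nonneg (∑ i : Fin 2, ‖d i‖ ^ 2)]
  rw [Fin.sum_univ_two] at h2
  simpa [Real.norm_eq_abs, sq_abs] using h2

lemma LparamE_normsq (s : USphere 1) (d : EuclideanSpace ℝ (Fin 2))
    (hd : d ∈ closedBall (0 : EuclideanSpace ℝ (Fin 2)) (1/3)) :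
    ‖LparamE s d‖ ^ 2 ≤ 7/10 := by
  have hs := circle_sq_sum s
  have hdd := disk_sq_sum d hd
  have hd0 : (d 0) ^ 2 ≤ 1/9 := by nlinarith [sq_nonneg (d 1)]
  have hd0' : d 0 ≤ 1/3 := by nlinarith
  rw [EuclideanSpace.norm_eq, Real.sq_sqrt (by positivity)]
  rw [Fin.sum_univ_three]
  simp only [LparamE, WithLp.ofLp_toLp]
  norm_num [Fin.ext_iff]
  simp only [Real.norm_eq_abs, mul_pow, sq_abs]
  have key : ((s : EuclideanSpace ℝ (Fin 2)) 1) ^ 2 * (1/2 + d 0) ^ 2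
      + ((s : EuclideanSpace ℝ (Fin 2)) 0) ^ 2 * (1/2 + d 0) ^ 2 = (1/2 + d 0) ^ 2 := by
    linear_combination (1/2 + d 0) ^ 2 * hs
  nlinarith [sq_nonneg (d 1), sq_nonneg (1/2 + d 0)]

lemma LparamE_mem (s : USphere 1) (d : EuclideanSpace ℝ (Fin 2))
    (hd : d ∈ closedBall (0 : EuclideanSpace ℝ (Fin 2)) (1/3)) :
    LparamE s d ∈ closedBall (0 : EuclideanSpace ℝ (Fin 3)) 1 := by
  rw [mem_closedBall, dist_zero_right]
  have h := LparamE_normsq s d hd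
  nlinarith [norm_nonneg (LparamE s d)]

/-- The solid torus `L`, viewed as a subset of `ℝP³` (it misses the boundary sphere). -/
def LsetRP : Set (RP 3) :=
  {p | ∃ (s : USphere 1) (d : EuclideanSpace ℝ (Fin 2))
    (hd : d ∈ closedBall (0 : EuclideanSpace ℝ (Fin 2)) (1/3)),
      q3 ⟨LparamE s d, LparamE_mem s d hd⟩ = p}

/-- The point of the boundary circle `∂D` corresponding to `z ∈ S¹` under the standard
identification `ℝP¹ ≅ ∂D` (via the squaring map on the circle). -/
def bdPtE (z : USphere 1) : EuclideanSpace ℝ (Fin 2) :=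
  WithLp.toLp 2 (fun i : Fin 2 =>
    if i = 0 then (((z : EuclideanSpace ℝ (Fin 2)) 0) ^ 2 - ((z : EuclideanSpace ℝ (Fin 2)) 1) ^ 2) / 3
    else (2 * ((z : EuclideanSpace ℝ (Fin 2)) 0) * ((z : EuclideanSpace ℝ (Fin 2)) 1)) / 3)

lemma bdPtE_mem (z : USphere 1) : bdPtE z ∈ closedBall (0 : EuclideanSpace ℝ (Fin 2)) (1/3) := by
  have hz := circle_sq_sum z
  rw [mem_closedBall, dist_zero_right, EuclideanSpace.norm_eq]
  have h1 : ∑ i : Fin 2, ‖bdPtE z i‖ ^ 2 = (1/3 : ℝ) ^ 2 := by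
    rw [Fin.sum_univ_two]
    simp only [bdPtE, WithLp.ofLp_toLp]
    norm_num [Fin.ext_iff]
    simp only [div_pow, mul_pow, sq_abs]
    linear_combination ((((z : EuclideanSpace ℝ (Fin 2)) 0) ^ 2 + ((z : EuclideanSpace ℝ (Fin 2)) 1) ^ 2 + 1) / 9) * hz
  rw [h1, Real.sqrt_sq (by norm_num)]

lemma bdPtE_neg (z w : USphere 1)
    (h : (z : EuclideanSpace ℝ (Fin 2)) = -(w : EuclideanSpace ℝ (Fin 2))) :
    bdPtE z = bdPtE w := by
  ext i
  have h0 : (z : EuclideanSpace ℝ (Fin 2)) 0 = -((w : EuclideanSpace ℝ (Fin 2)) 0) := by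
    rw [h]; rfl
  have h1 : (z : EuclideanSpace ℝ (Fin 2)) 1 = -((w : EuclideanSpace ℝ (Fin 2)) 1) := by
    rw [h]; rfl
  simp only [bdPtE, WithLp.ofLp_toLp, h0, h1]
  ring_nf

/-- The attaching map `S¹ × ℝP¹ → ℝP³` onto the boundary `∂L` of the solid torus,
using the identification of `ℝP¹` with `∂D`. -/
def attachM1 (s : USphere 1) : RP 1 → RP 3 :=
  Quotient.lift (fun z : USphere 1 => q3 ⟨LparamE s (bdPtE z), LparamE_mem s (bdPtE z) (bdPtE_mem z)⟩)
    (by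
      rintro z w (h | h)
      · have : z = w := Subtype.ext h
        rw [this]
      · have : bdPtE z = bdPtE w := bdPtE_neg z w h
        simp only [this])

/-- The underlying type of the first modification `M₁` of `ℝP³`: the disjoint union of
`ℝP³` minus the interior of the solid torus `L` and of `S¹ × ℝP²`. -/
abbrev M1Carrier : Type := {p : RP 3 // p ∉ interior LsetRP} ⊕ (USphere 1 × RP 2)

/-- The gluing relation for the first modification: a boundary point `attachM1 s c ∈ ∂L`
is identified with the point `(s, c) ∈ S¹ × ℝP¹ ⊂ S¹ × ℝP²`. -/
def M1Rel : M1Carrier → M1Carrier → Prop := fun p q =>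
  ∃ (s : USphere 1) (c : RP 1) (h : attachM1 s c ∉ interior LsetRP),
    p = Sum.inl ⟨attachM1 s c, h⟩ ∧ q = Sum.inr (s, rpIncl 1 c)

/-- The first modification `M₁` of `ℝP³`: remove the interior of the solid torus `L` and
attach `S¹ × ℝP²` via the map `S¹ × ℝP¹ → ∂L`. -/
def M1 : Type := Quot M1Rel

instance : TopologicalSpace M1 := by unfold M1; infer_instance

lemma rpIncl_not_mem_LsetRP (c : RP 2) : rpIncl 2 c ∉ LsetRP := by
  rintro ⟨s, d, hd, heq⟩
  obtain ⟨y, rfl⟩ := Quotient.exists_rep c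
  have hmk : rpIncl 2 (Quotient.mk (antipodalSetoid 2) y)
      = Quotient.mk (antipodalSetoid 3) (sphereIncl 2 y) := rfl
  rw [hmk] at heq
  have heq' := Quotient.exact heq
  have hpos : 0 < Real.sqrt (1 - ‖LparamE s d‖ ^ 2) := by
    apply Real.sqrt_pos.mpr
    have := LparamE_normsq s d hd
    linarith
  have hlift3 : hemiLift (LparamE s d) 3 = Real.sqrt (1 - ‖LparamE s d‖ ^ 2) := by
    simp only [hemiLift, WithLp.ofLp_toLp]
    rw [dif_neg (by decide)]
  have hincl3 : (sphereIncl 2 y : EuclideanSpace ℝ (Fin 4)) 3 = 0 := by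
    show coordIncl 2 (y : EuclideanSpace ℝ (Fin 3)) 3 = 0
    simp only [coordIncl, WithLp.ofLp_toLp]
    rw [dif_neg (by decide)]
  rcases heq' with h | h
  · have h3' : hemiLift (LparamE s d) 3 = (sphereIncl 2 y : EuclideanSpace ℝ (Fin 4)) 3 :=
      congrArg (fun v : EuclideanSpace ℝ (Fin 4) => v 3) h
    rw [hlift3, hincl3] at h3'
    linarith
  · have h3' : hemiLift (LparamE s d) 3 = -((sphereIncl 2 y : EuclideanSpace ℝ (Fin 4)) 3) :=
      congrArg (fun v : EuclideanSpace ℝ (Fin 4) => v 3) h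
    rw [hlift3, hincl3, neg_zero] at h3'
    linarith

lemma rpIncl_not_mem_interior_LsetRP (c : RP 2) : rpIncl 2 c ∉ interior LsetRP :=
  fun h => rpIncl_not_mem_LsetRP c (interior_subset h)

/-- The copy of the projective plane `ℝP² = q₃(∂B³)` inside the first modification `M₁`. -/
def rp2ToM1 : RP 2 → M1 :=
  fun c => Quot.mk M1Rel (Sum.inl ⟨rpIncl 2 c, rpIncl_not_mem_interior_LsetRP c⟩)

/-! ### The second modification of ℝP³ -/

/-- The solid torus `R = q₃(L) ⊂ ℝP³`, where `L ⊂ B³` is the cylinder `x² + y² ≤ 1/4`. -/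
def RsetRP : Set (RP 3) :=
  {p | ∃ x : UBall3, ((x : EuclideanSpace ℝ (Fin 3)) 0) ^ 2 + ((x : EuclideanSpace ℝ (Fin 3)) 1) ^ 2 ≤ 1/4
        ∧ q3 x = p}

/-- The copy of `ℝP² = q₃(∂B³)` inside `ℝP³`. -/
def RP2in3 : Set (RP 3) := Set.range (rpIncl 2)

/-- The disk `D = R ∩ ℝP²`. -/
def DsetM2 : Set (RP 3) := RsetRP ∩ RP2in3

/-- The boundary circle `∂D = D ∩ ∂R` of the disk `D`. -/
def bdDM2 : Set (RP 3) := DsetM2 ∩ frontier RsetRP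

/-- The subspace `T = S¹ × ℝP² ∪ {a} × ℝP³` of `S¹ × ℝP³`. -/
def TSpace (a : USphere 1) : Type :=
  {p : USphere 1 × RP 3 // (∃ c : RP 2, p.2 = rpIncl 2 c) ∨ p.1 = a}

instance (a : USphere 1) : TopologicalSpace (TSpace a) := by unfold TSpace; infer_instance

/-- The projection `π : T → S¹` onto the first coordinate. -/
def TProj (a : USphere 1) : C(TSpace a, USphere 1) :=
  ⟨fun p => p.val.1, by exact (continuous_fst.comp continuous_subtype_val)⟩

/-- The underlying type of the second modification `M₂` of `ℝP³`. -/
abbrev M2Carrier (a : USphere 1) : Type := {p : RP 3 // p ∉ interior RsetRP} ⊕ (TSpace a)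

/-- The gluing relation for the second modification, relative to a solid-torus structure
`φ : S¹ × D ≃ₜ R` on `R` and an identification `ψ : ∂D ≃ₜ ℝP¹`: a point `φ(s,d) ∈ ∂R` is
identified with the point `(s, ψ d) ∈ S¹ × ℝP¹ ⊂ S¹ × ℝP² ⊂ T`. -/
def M2Rel (a : USphere 1) (φ : (USphere 1 × ↥DsetM2) ≃ₜ ↥RsetRP) (ψ : ↥bdDM2 ≃ₜ RP 1) :
    M2Carrier a → M2Carrier a → Prop := fun p q =>
  ∃ (s : USphere 1) (d : ↥bdDM2) (h : (φ (s, ⟨d.val, d.prop.1⟩)).val ∉ interior RsetRP),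
    p = Sum.inl ⟨(φ (s, ⟨d.val, d.prop.1⟩)).val, h⟩ ∧
    q = Sum.inr ⟨(s, rpIncl 2 (rpIncl 1 (ψ d))), Or.inl ⟨rpIncl 1 (ψ d), rfl⟩⟩

/-- The second modification `M₂` of `ℝP³`: remove the interior of the solid torus `R` and
attach `S¹ × ℝP² ∪ {a} × ℝP³` via the inclusion `∂R = S¹ × ∂D → S¹ × ℝP² ∪ {a} × ℝP³`. -/
def M2 (a : USphere 1) (φ : (USphere 1 × ↥DsetM2) ≃ₜ ↥RsetRP) (ψ : ↥bdDM2 ≃ₜ RP 1) : Type :=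
  Quot (M2Rel a φ ψ)

instance (a : USphere 1) (φ : (USphere 1 × ↥DsetM2) ≃ₜ ↥RsetRP) (ψ : ↥bdDM2 ≃ₜ RP 1) :
    TopologicalSpace (M2 a φ ψ) := by unfold M2; infer_instance

/-!
Precomposed with the double cover `S¹ → ℝP¹`, `f` becomes an even loop in `ℝP²`. Lifting half of
it to `S²` and closing up with the deck transformation lifts it to a loop in `S² ⊂ ℝ³ ∖ 0`. Every
loop in `ℝ³ ∖ 0` is nullhomotopic: a `C¹` approximation misses some line through the origin by
Sard's theorem, so straight-line homotopies contract it. Hence the even loop extends over the disk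
`D²`, and since `ℝP²` is `D²` with antipodal boundary points identified, the extension descends
to `ℝP²`.
-/

open Topology unitInterval Real Module

local notation "ℝ^" m => EuclideanSpace ℝ (Fin m)

section

variable {E : Type*} [NormedAddCommGroup E] [NormedSpace ℝ E]

lemma homotopic_of_segment_ne_zero {X : Type*} [TopologicalSpace X] (a b : C(X, ({0}ᶜ : Set E)))
    (h : ∀ x (t : I), (1 - (t : ℝ)) • (a x : E) + (t : ℝ) • (b x : E) ≠ 0) : a.Homotopic b :=
  ⟨{ toFun := fun p => ⟨(1 - (p.1 : ℝ)) • (a p.2 : E) + (p.1 : ℝ) • (b p.2 : E), h p.2 p.1⟩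
     continuous_toFun := by fun_prop
     map_zero_left := fun x => by simp
     map_one_left := fun x => by simp }⟩

lemma exists_forall_smul_ne_of_contDiff [FiniteDimensional ℝ E] (hE : 2 < finrank ℝ E)
    {φ : ℝ → E} (hφ : ContDiff ℝ 1 φ) : ∃ v : E, ∀ s t : ℝ, s • φ t ≠ v := by
  have hcone : ContDiff ℝ 1 fun q : ℝ × ℝ => q.1 • φ q.2 :=
    contDiff_fst.smul (hφ.comp contDiff_snd)
  obtain ⟨v, hv⟩ := (hcone.dense_compl_range_of_finrank_lt_finrank (by simpa using hE)).nonempty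
  exact ⟨v, fun s t h => hv ⟨(s, t), h⟩⟩

def coneMap : C(I × sphere (0 : E) 1, closedBall (0 : E) 1) :=
  ⟨fun p => ⟨(p.1 : ℝ) • (p.2 : E), by simp [norm_smul, abs_of_nonneg p.1.2.1, p.1.2.2]⟩,
    by fun_prop⟩

variable [FiniteDimensional ℝ E] [Nontrivial E]

lemma isQuotientMap_coneMap : IsQuotientMap (coneMap (E := E)) := by
  refine coneMap.continuous.isClosedMap.isQuotientMap coneMap.continuous ?_
  rintro ⟨w, hw⟩
  by_cases h : w = 0
  · obtain ⟨z, hz⟩ := (NormedSpace.sphere_nonempty (x := (0 : E))).2 zero_le_one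
    exact ⟨(0, ⟨z, hz⟩), Subtype.ext (by simp [coneMap, h])⟩
  · have hw' : ‖w‖ ≤ 1 := by simpa using hw
    refine ⟨(⟨‖w‖, norm_nonneg w, hw'⟩, ⟨‖w‖⁻¹ • w, by simp [norm_smul, h]⟩), Subtype.ext ?_⟩
    simp [coneMap, smul_smul, h]

lemma exists_extension_of_nullhomotopic {Y : Type*} [TopologicalSpace Y]
    (g : C(sphere (0 : E) 1, Y)) (hg : g.Nullhomotopic) :
    ∃ G : C(closedBall (0 : E) 1, Y), ∀ z, G (inclusion sphere_subset_closedBall z) = g z := by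
  obtain ⟨y, ⟨H⟩⟩ := hg
  have hfac : Function.FactorsThrough H.symm.toContinuousMap coneMap := by
    rintro ⟨t, z⟩ ⟨s, w⟩ h
    have h' : (t : ℝ) • (z : E) = (s : ℝ) • (w : E) := congrArg Subtype.val h
    have hts : t = s := by
      ext
      simpa [norm_smul, abs_of_nonneg t.prop.1, abs_of_nonneg s.prop.1] using congrArg norm h'
    subst hts
    rcases eq_or_ne t 0 with rfl | ht
    · simp
    · rw [show z = w from Subtype.ext (smul_right_injective E (by simpa using ht) h')]
  refine ⟨isQuotientMap_coneMap.lift _ hfac, fun z => ?_⟩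
  have hz : coneMap (1, z) = inclusion sphere_subset_closedBall z := Subtype.ext (by simp [coneMap])
  have h := DFunLike.congr_fun (isQuotientMap_coneMap.lift_comp _ hfac) (1, z)
  rw [ContinuousMap.comp_apply, hz] at h
  simp [h]

end

lemma norm_le_sum_norm_apply {m : ℕ} (x : ℝ^m) : ‖x‖ ≤ ∑ i, ‖x i‖ := by
  conv_lhs => rw [← (EuclideanSpace.basisFun (Fin m) ℝ).sum_repr x]
  refine (norm_sum_le _ _).trans (le_of_eq ?_)
  simp [norm_smul]

lemma norm_eq_one_iff_sq_add_sq (z : ℝ^2) : ‖z‖ = 1 ↔ z 0 ^ 2 + z 1 ^ 2 = 1 := by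
  rw [← pow_left_inj₀ (norm_nonneg z) zero_le_one two_ne_zero]
  simp [EuclideanSpace.norm_sq_eq, Fin.sum_univ_two]

lemma sq_add_sq_of_mem_circle (z : USphere 1) : (z : ℝ^2) 0 ^ 2 + (z : ℝ^2) 1 ^ 2 = 1 :=
  (norm_eq_one_iff_sq_add_sq _).1 (by simp)

def circlePt (θ : ℝ) : USphere 1 :=
  ⟨!₂[cos θ, sin θ], by simp [norm_eq_one_iff_sq_add_sq]⟩

@[simp] lemma circlePt_zero (θ : ℝ) : (circlePt θ : ℝ^2) 0 = cos θ := rfl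

@[simp] lemma circlePt_one (θ : ℝ) : (circlePt θ : ℝ^2) 1 = sin θ := rfl

lemma continuous_circlePt : Continuous circlePt := by
  unfold circlePt
  fun_prop

lemma circlePt_add_pi (θ : ℝ) : circlePt (θ + π) = -circlePt θ := by
  ext i
  fin_cases i <;> simp [coe_neg_sphere]

lemma circlePt_arccos {z : USphere 1} (hz : 0 ≤ (z : ℝ^2) 1) :
    circlePt (arccos ((z : ℝ^2) 0)) = z := by
  have h := sq_add_sq_of_mem_circle z
  ext i
  fin_cases i
  · exact cos_arccos (by nlinarith) (by nlinarith)
  · show sin _ = (z : ℝ^2) 1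
    rw [sin_arccos, show 1 - (z : ℝ^2) 0 ^ 2 = (z : ℝ^2) 1 ^ 2 by linarith, sqrt_sq hz]

lemma surjective_circlePt : Function.Surjective circlePt := by
  intro z
  rcases le_total 0 ((z : ℝ^2) 1) with hz | hz
  · exact ⟨_, circlePt_arccos hz⟩
  · refine ⟨arccos (((-z : USphere 1) : ℝ^2) 0) + π, ?_⟩
    rw [circlePt_add_pi, circlePt_arccos (by simpa [coe_neg_sphere] using hz), neg_neg]

def smoothAlongCircle : Subalgebra ℝ C(USphere 1, ℝ) where
  carrier := {g | ContDiff ℝ 1 (g ∘ circlePt)}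
  mul_mem' {f g} (hf : ContDiff ℝ 1 (f ∘ circlePt)) (hg : ContDiff ℝ 1 (g ∘ circlePt)) :=
    hf.mul hg
  add_mem' {f g} (hf : ContDiff ℝ 1 (f ∘ circlePt)) (hg : ContDiff ℝ 1 (g ∘ circlePt)) :=
    hf.add hg
  algebraMap_mem' r := (contDiff_const : ContDiff ℝ 1 fun _ : ℝ => r)

lemma smoothAlongCircle_separatesPoints : smoothAlongCircle.SeparatesPoints := by
  intro x y hxy
  obtain ⟨i, hi⟩ : ∃ i, (x : ℝ^2) i ≠ (y : ℝ^2) i := by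
    by_contra! h
    exact hxy (Subtype.ext (PiLp.ext h))
  refine ⟨_, ⟨⟨fun z => (z : ℝ^2) i, by fun_prop⟩, ?_, rfl⟩, hi⟩
  show ContDiff ℝ 1 fun θ => (circlePt θ : ℝ^2) i
  fin_cases i
  exacts [contDiff_cos, contDiff_sin]

lemma exists_contDiff_near {m : ℕ} (h : C(USphere 1, ℝ^m)) {ε : ℝ} (hε : 0 < ε) :
    ∃ p : C(USphere 1, ℝ^m), ContDiff ℝ 1 (p ∘ circlePt) ∧ ∀ z, ‖p z - h z‖ < ε := by
  have hmε : 0 < ε / (m + 1) := by positivity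
  choose g hg using fun i : Fin m =>
    ContinuousMap.exists_mem_subalgebra_near_continuous_of_separatesPoints smoothAlongCircle
      smoothAlongCircle_separatesPoints (fun z => h z i) (by fun_prop) _ hmε
  refine ⟨⟨fun z => WithLp.toLp 2 fun i => (g i : C(USphere 1, ℝ)) z, by fun_prop⟩,
    contDiff_euclidean.2 fun i => (g i).2, fun z => ?_⟩
  calc ‖_‖ ≤ ∑ i, ‖(g i : C(USphere 1, ℝ)) z - h z i‖ := norm_le_sum_norm_apply _
    _ ≤ ∑ _i : Fin m, ε / (m + 1) := Finset.sum_le_sum fun i _ => (hg i z).le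
    _ < ε := by
      rw [Finset.sum_const, Finset.card_univ, Fintype.card_fin, nsmul_eq_mul, mul_div_assoc']
      exact (div_lt_iff₀ (by positivity)).2 (by nlinarith)

/-- A `C¹` approximation of `h` misses a line through the origin (Sard), and it is close enough
to `h` to be joined to it by a straight-line homotopy avoiding `0`. -/
lemma nullhomotopic_circle_to_ne_zero {m : ℕ} (hm : 2 < m)
    (h : C(USphere 1, ({0}ᶜ : Set (ℝ^m)))) : h.Nullhomotopic := by
  have : Nonempty (USphere 1) := ⟨circlePt 0⟩
  obtain ⟨z₀, -, hz₀⟩ := isCompact_univ.exists_isMinOn univ_nonempty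
    (continuous_norm.comp (continuous_subtype_val.comp h.continuous)).continuousOn
  set r := ‖(h z₀ : ℝ^m)‖
  have hr : 0 < r := norm_pos_iff.2 (h z₀).2
  have hhr (z) : r ≤ ‖(h z : ℝ^m)‖ := hz₀ (mem_univ z)
  obtain ⟨p, hp, hph⟩ := exists_contDiff_near ⟨fun z => (h z : ℝ^m), by fun_prop⟩ hr
  obtain ⟨v, hv⟩ := exists_forall_smul_ne_of_contDiff (by simpa using hm) hp
  have hv0 : v ≠ 0 := fun h0 => hv 0 0 (by simp [h0])
  have hp0 (z) : p z ≠ 0 := fun h0 => by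
    have := hph z
    rw [h0, zero_sub, norm_neg] at this
    exact (hhr z).not_gt this
  let p' : C(USphere 1, ({0}ᶜ : Set (ℝ^m))) := ⟨fun z => ⟨p z, hp0 z⟩, by fun_prop⟩
  refine ⟨⟨v, hv0⟩, (homotopic_of_segment_ne_zero h p' fun z t heq => ?_).trans
    (homotopic_of_segment_ne_zero p' (.const _ ⟨v, hv0⟩) fun z t heq => ?_)⟩
  · have hhz : (h z : ℝ^m) = -((t : ℝ) • (p z - h z)) := by
      refine eq_neg_iff_add_eq_zero.2 (Eq.trans ?_ heq)
      simp only [p', ContinuousMap.coe_mk]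
      module
    have hle : ‖(h z : ℝ^m)‖ ≤ ‖p z - h z‖ := by
      conv_lhs => rw [hhz, norm_neg, norm_smul, Real.norm_eq_abs, abs_of_nonneg t.2.1]
      exact mul_le_of_le_one_left (norm_nonneg _) t.2.2
    exact (hhr z).not_gt (hle.trans_lt (hph z))
  · obtain ⟨θ, rfl⟩ := surjective_circlePt z
    have ht : (t : ℝ) ≠ 0 := by
      rintro ht
      simp only [ht, sub_zero, one_smul, zero_smul, add_zero] at heq
      exact hp0 _ heq
    refine hv (-(1 - t) / t) θ (smul_right_injective _ ht ?_)
    have heq' : (1 - (t : ℝ)) • p (circlePt θ) = -((t : ℝ) • v) :=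
      eq_neg_of_add_eq_zero_left heq
    simp only [Function.comp_apply, smul_smul, mul_div_cancel₀ _ ht, neg_smul, heq', neg_neg]

namespace RealProjectiveSpace

variable {n : ℕ}

lemma continuous_pcov : Continuous (pcov n) := continuous_quotient_mk'

lemma pcov_neg (x : USphere n) : pcov n (-x) = pcov n x :=
  Quotient.sound (Or.inr rfl)

lemma pcov_eq_pcov_iff {x y : USphere n} : pcov n x = pcov n y ↔ x = y ∨ x = -y := by
  refine Quotient.eq.trans (or_congr Subtype.ext_iff.symm ?_)
  rw [Subtype.ext_iff, coe_neg_sphere]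

lemma coe_smul_sphere (g : sphere (0 : ℝ) 1) (y : USphere n) :
    ((g • y : USphere n) : ℝ^(n+1)) = (g : ℝ) • (y : ℝ^(n+1)) := rfl

lemma neg_one_smul_sphere (y : USphere n) : (-1 : sphere (0 : ℝ) 1) • y = -y :=
  Subtype.ext (by rw [coe_smul_sphere, coe_neg_sphere, coe_neg_sphere]; simp)

lemma unitSphere_eq_one_or_eq_neg_one (g : sphere (0 : ℝ) 1) : g = 1 ∨ g = -1 := by
  have hg : |(g : ℝ)| = 1 := by rw [← Real.norm_eq_abs, ← mem_sphere_zero_iff_norm]; exact g.2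
  rcases abs_eq (zero_le_one' ℝ) |>.1 hg with h | h
  · exact Or.inl (Subtype.ext h)
  · exact Or.inr (Subtype.ext (by rw [h, coe_neg_sphere]; rfl))

lemma isQuotientCoveringMap_pcov : IsQuotientCoveringMap (pcov n) (sphere (0 : ℝ) 1) where
  toIsQuotientMap := isQuotientMap_quotient_mk'
  apply_eq_iff_mem_orbit {x y} := by
    rw [pcov_eq_pcov_iff, MulAction.mem_orbit_iff]
    constructor
    · rintro (rfl | rfl)
      exacts [⟨1, one_smul _ _⟩, ⟨-1, neg_one_smul_sphere y⟩]
    · rintro ⟨g, rfl⟩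
      rcases unitSphere_eq_one_or_eq_neg_one g with rfl | rfl
      exacts [Or.inl (one_smul _ _), Or.inr (neg_one_smul_sphere y)]
  disjoint x := by
    refine ⟨{y | 0 < inner ℝ (y : ℝ^(n+1)) x}, ?_, ?_⟩
    · exact (isOpen_lt continuous_const (by fun_prop)).mem_nhds (by simp)
    · rintro g ⟨_, ⟨y, hy, rfl⟩, hgy⟩
      have hg : 0 < (g : ℝ) * inner ℝ (y : ℝ^(n+1)) x := by
        simpa [coe_smul_sphere, real_inner_smul_left] using hgy
      rcases unitSphere_eq_one_or_eq_neg_one g with rfl | rfl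
      · rfl
      · simp only [coe_neg_sphere, Metric.unitSphere.coe_one, neg_one_mul, Left.neg_pos_iff] at hg
        exact absurd hy hg.not_gt

lemma isCoveringMap_pcov : IsCoveringMap (pcov n) :=
  isQuotientCoveringMap_pcov.isCoveringMap

lemma exists_lift_of_map_neg_eq (g : C(USphere 1, RP n)) (hg : ∀ z, g (-z) = g z) :
    ∃ h : C(USphere 1, USphere n), ∀ z, pcov n (h z) = g z := by
  let γ : C(I, RP n) := g.comp ⟨fun t => circlePt (π * t), continuous_circlePt.comp (by fun_prop)⟩
  obtain ⟨e, he⟩ := Quotient.exists_rep (γ 0)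
  obtain ⟨Γ, hΓ, -⟩ := isCoveringMap_pcov.exists_path_lifts γ e he.symm
  have hΓγ (t : I) : pcov n (Γ t) = γ t := congrFun hΓ t
  have hends : pcov n (Γ 1) = pcov n (Γ 0) := by
    have := circlePt_add_pi 0
    rw [zero_add] at this
    simp [hΓγ, γ, this, hg]
  obtain ⟨ε, hε⟩ := isQuotientCoveringMap_pcov.apply_eq_iff_mem_orbit.1 hends
  let θ : C(USphere 1, I) :=
    ⟨fun z => ⟨arccos ((z : ℝ^2) 0) / π, div_nonneg (arccos_nonneg _) pi_pos.le,
      (div_le_one pi_pos).2 (arccos_le_pi _)⟩, by fun_prop⟩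
  have hθ {z : USphere 1} (hz : 0 ≤ (z : ℝ^2) 1) : pcov n (Γ (θ z)) = g z := by
    rw [hΓγ]
    simp [γ, θ, mul_div_cancel₀ _ pi_ne_zero, circlePt_arccos hz]
  -- `Γ ∘ θ` lifts `g` on the upper half circle, `ε • Γ ∘ θ ∘ neg` on the lower one; they agree
  -- at `(±1, 0)` because `Γ 1 = ε • Γ 0` and `ε • ε = 1`.
  refine ⟨⟨fun z => if 0 ≤ (z : ℝ^2) 1 then Γ (θ z) else ε • Γ (θ (-z)), ?_⟩, fun z => ?_⟩
  · refine Continuous.if_le (by fun_prop) (by fun_prop) continuous_const (by fun_prop) ?_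
    intro z hz
    have hεε : ε • Γ 1 = Γ 0 := by
      rw [← hε]
      rcases unitSphere_eq_one_or_eq_neg_one ε with rfl | rfl <;> simp [neg_one_smul_sphere]
    have h := sq_add_sq_of_mem_circle z
    rw [← hz, zero_pow two_ne_zero, add_zero, sq_eq_one_iff] at h
    rcases h with h | h
    · have h0 : θ z = 0 := Subtype.ext (by simp [θ, h])
      have h1 : θ (-z) = 1 := Subtype.ext (by simp [θ, coe_neg_sphere, h])
      simp only [h0, h1, hεε]
    · have h0 : θ z = 1 := Subtype.ext (by simp [θ, h])
      have h1 : θ (-z) = 0 := Subtype.ext (by simp [θ, coe_neg_sphere, h])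
      simp only [h0, h1, hε]
  · dsimp only [ContinuousMap.coe_mk]
    split_ifs with hz
    · exact hθ hz
    · rw [isQuotientCoveringMap_pcov.map_smul, hθ, hg]
      simpa [coe_neg_sphere] using (not_le.1 hz).le

lemma nullhomotopic_of_lift_circle (hn : 1 < n) {g : C(USphere 1, RP n)}
    {h : C(USphere 1, USphere n)} (hgh : ∀ z, pcov n (h z) = g z) : g.Nullhomotopic := by
  let incl : C(USphere 1, ({0}ᶜ : Set (ℝ^(n+1)))) :=
    ⟨fun z => ⟨h z, ne_zero_of_mem_unit_sphere (h z)⟩, by fun_prop⟩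
  let proj : C(({0}ᶜ : Set (ℝ^(n+1))), RP n) :=
    ⟨fun y => pcov n (homeomorphUnitSphereProd _ y).1,
      continuous_pcov.comp (continuous_fst.comp (homeomorphUnitSphereProd _).continuous)⟩
  have hg : g = proj.comp incl := by
    ext z
    rw [← hgh]
    refine congrArg (pcov n) (Subtype.ext ?_)
    simp [incl]
  exact hg ▸ (nullhomotopic_circle_to_ne_zero (m := n + 1) (by omega) incl).comp_right proj

def dropLast (y : ℝ^(n+2)) : ℝ^(n+1) := WithLp.toLp 2 fun i => y (Fin.castSucc i)

lemma norm_sq_eq_norm_dropLast_sq_add (y : ℝ^(n+2)) :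
    ‖y‖ ^ 2 = ‖dropLast y‖ ^ 2 + y (Fin.last _) ^ 2 := by
  simp [EuclideanSpace.norm_sq_eq, Fin.sum_univ_castSucc, dropLast]

lemma dropLast_coordIncl (x : ℝ^(n+1)) : dropLast (coordIncl n x) = x := by
  ext i
  simp [dropLast, coordIncl, (Fin.is_le i).not_gt]

lemma coordIncl_last (x : ℝ^(n+1)) : coordIncl n x (Fin.last _) = 0 := by
  simp [coordIncl]

def sphereToBall : C(USphere (n+1), closedBall (0 : ℝ^(n+1)) 1) :=
  ⟨fun y => ⟨dropLast y, by
    have h := norm_sq_eq_norm_dropLast_sq_add (y : ℝ^(n+2))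
    rw [norm_eq_of_mem_sphere y, one_pow] at h
    rw [mem_closedBall_zero_iff]
    nlinarith [norm_nonneg (dropLast (y : ℝ^(n+2))), sq_nonneg ((y : ℝ^(n+2)) (Fin.last _))]⟩,
    by unfold dropLast; fun_prop⟩

/-- `ℝPⁿ⁺¹` is the closed ball `Dⁿ⁺¹` with antipodal boundary points identified, via the
projection of the upper hemisphere. -/
lemma exists_extension_of_disk {Y : Type*} [TopologicalSpace Y]
    (F : C(closedBall (0 : ℝ^(n+1)) 1, Y))
    (hF : ∀ z : USphere n,
      F (inclusion sphere_subset_closedBall (-z)) = F (inclusion sphere_subset_closedBall z)) :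
    ∃ f' : C(RP (n+1), Y), ∀ z : USphere n,
      f' (rpIncl n (pcov n z)) = F (inclusion sphere_subset_closedBall z) := by
  let top : C(USphere (n+1), ℝ) := ⟨fun y => (y : ℝ^(n+2)) (Fin.last _), by fun_prop⟩
  have hseam {y : USphere (n+1)} (hy : top y = 0) :
      F (sphereToBall y) = F (sphereToBall (-y)) := by
    have hz : dropLast (y : ℝ^(n+2)) ∈ sphere (0 : ℝ^(n+1)) 1 := by
      have h := norm_sq_eq_norm_dropLast_sq_add (y : ℝ^(n+2))
      rw [norm_eq_of_mem_sphere y, one_pow, show (y : ℝ^(n+2)) (Fin.last _) = 0 from hy] at h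
      rw [mem_sphere_zero_iff_norm]
      nlinarith [norm_nonneg (dropLast (y : ℝ^(n+2)))]
    have h1 : sphereToBall y = inclusion sphere_subset_closedBall ⟨_, hz⟩ := rfl
    have h2 : sphereToBall (-y) = inclusion sphere_subset_closedBall (-⟨_, hz⟩) := by
      ext i
      simp [sphereToBall, dropLast, coe_neg_sphere]
    rw [h1, h2, hF]
  let fhat : C(USphere (n+1), Y) :=
    ⟨fun y => if 0 ≤ top y then F (sphereToBall y) else F (sphereToBall (-y)),
      Continuous.if_le (by fun_prop) (by fun_prop) continuous_const top.continuous
        fun y hy => hseam hy.symm⟩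
  have hfhat (y : USphere (n+1)) : fhat (-y) = fhat y := by
    have : top (-y) = -top y := by simp [top, coe_neg_sphere]
    simp only [fhat, ContinuousMap.coe_mk, this, neg_neg, Left.nonneg_neg_iff]
    split_ifs with h1 h2 h2
    · exact (hseam (le_antisymm h1 h2)).symm
    · rfl
    · rfl
    · exact absurd (not_le.1 h2).le h1
  refine ⟨⟨Quotient.lift fhat fun a b hab => ?_, fhat.continuous.quotient_lift _⟩, fun z => ?_⟩
  · rcases pcov_eq_pcov_iff.1 (Quotient.sound hab) with rfl | rfl
    exacts [rfl, hfhat b]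
  · show fhat (sphereIncl n z) = _
    have htop : top (sphereIncl n z) = 0 := coordIncl_last _
    have hball : sphereToBall (sphereIncl n z) = inclusion sphere_subset_closedBall z :=
      Subtype.ext (dropLast_coordIncl _)
    simp only [fhat, ContinuousMap.coe_mk, htop, le_refl, if_true, hball]

end RealProjectiveSpace

open RealProjectiveSpace

/-- **Proposition 2.1.** Any map `f : ℝP¹ → ℝP²` extends to a map `f' : ℝP² → ℝP²`. -/
theorem rp1_to_rp2_extends_over_rp2 (f : C(RP 1, RP 2)) :
    ∃ f' : C(RP 2, RP 2), ∀ x : RP 1, f' (rpIncl 1 x) = f x := by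
  let g : C(USphere 1, RP 2) := f.comp ⟨pcov 1, continuous_pcov⟩
  have hg (z : USphere 1) : g (-z) = g z := congrArg f (pcov_neg z)
  obtain ⟨h, hh⟩ := exists_lift_of_map_neg_eq g hg
  obtain ⟨F, hF⟩ := exists_extension_of_nullhomotopic g (nullhomotopic_of_lift_circle one_lt_two hh)
  obtain ⟨f', hf'⟩ := exists_extension_of_disk F fun z => by rw [hF, hF, hg]
  refine ⟨f', fun x => ?_⟩
  obtain ⟨z, rfl⟩ := Quotient.exists_rep x
  exact (hf' z).trans (hF z)
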